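/- Let T be a tree with n vertices, and let a ≥ 1 and b ≥ 0 be integers. Then the number of nonempty subsets A ⊆ E(T) with #A = a and #K(A) = b equals Σ_{λ ⊢ n} ψ(λ,a,b) · c_λ(T), where for a partition λ = (λ_1 ≥ … ≥ λ_ℓ) of n one sets ψ(λ,a,b) = (−1)^{a+b} C(ℓ−1, ℓ−n+a+b) Σ_{k=1}^{ℓ} C(λ_k−1, a), with the convention C(p,q) = 0 if q < 0 or q > p. -/

import Mathlib

open SimpleGraph Finset

variable {V : Type*} {W : Type*}

open Classical in
/-- `edgeSetType A` : the "type" of the edge set `A`, i.e. the partition (as a multiset of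
positive integers) of `#V` whose parts are the orders of the connected components of the
spanning subgraph `(V, A)`. -/
noncomputable def edgeSetType [Fintype V] (A : Finset (Sym2 V)) : Multiset ℕ :=
  ((Finset.univ : Finset V).image
    (fun v => (SimpleGraph.fromEdgeSet (↑A : Set (Sym2 V))).connectedComponentMk v)).val.map
    (fun c => c.supp.ncard)

open Classical in
/-- `cCoeff G λ = Σ_{A ⊆ E(G), type(A) = λ} (−1)^{#A}`, the coefficient of the power-sum
symmetric function `p_λ` in the chromatic symmetric function `X_G`. -/
noncomputable def cCoeff [Fintype V] (G : SimpleGraph V) (lam : Multiset ℕ) : ℤ :=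
  ∑ A ∈ (Finset.univ : Finset (Sym2 V)).powerset,
    if (↑A : Set (Sym2 V)) ⊆ G.edgeSet ∧ edgeSetType A = lam then (-1 : ℤ) ^ A.card else 0

open Classical in
/-- `NCoeff G λ` : the number of edge sets `A ⊆ E(G)` with `type(A) = λ`. -/
noncomputable def NCoeff [Fintype V] (G : SimpleGraph V) (lam : Multiset ℕ) : ℕ :=
  ((Finset.univ : Finset (Sym2 V)).powerset.filter
    (fun (A : Finset (Sym2 V)) => (↑A : Set (Sym2 V)) ⊆ G.edgeSet ∧ edgeSetType A = lam)).card

/-- `S` is a subtree of `T`: a nonempty set of edges of `T` such that the subgraph consisting of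
the edges of `S` together with their endpoints is connected. -/
def IsSubtreeSet (T : SimpleGraph V) (S : Set (Sym2 V)) : Prop :=
  S.Nonempty ∧ S ⊆ T.edgeSet ∧
    ((SimpleGraph.fromEdgeSet S).induce {v | ∃ e ∈ S, v ∈ e}).Connected

/-- The leaf edges of an edge set `S` : edges of `S` having an endpoint incident to no other
edge of `S`. -/
def leafEdges (S : Set (Sym2 V)) : Set (Sym2 V) :=
  {e | e ∈ S ∧ ∃ v ∈ e, ∀ e' ∈ S, v ∈ e' → e' = e}

/-- The connector `K(A)` of a (nonempty) edge set `A` of a tree `T`: the minimal subset `K` of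
`E(T) \ A` such that `A ∪ K` is a subtree of `T`. -/
def connector (T : SimpleGraph V) (A : Set (Sym2 V)) : Set (Sym2 V) :=
  ⋂₀ {B | B ⊆ T.edgeSet \ A ∧ IsSubtreeSet T (A ∪ B)}

/-- Integer-valued binomial coefficient `C(p, q)` with the convention `C(p,q) = 0` for `q < 0`
(and, as usual, for `q > p`). -/
def chooseInt (p : ℕ) (q : ℤ) : ℤ := if 0 ≤ q then (p.choose q.toNat : ℤ) else 0

/-- `ψ(λ,a,b) = (−1)^{a+b} C(ℓ−1, ℓ−n+a+b) Σ_{k=1}^{ℓ} C(λ_k − 1, a)` for a partition `λ` of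
`n` with `ℓ` parts. -/
def psi (n : ℕ) (lam : Multiset ℕ) (a b : ℕ) : ℤ :=
  (-1 : ℤ) ^ (a + b) * chooseInt (lam.card - 1) ((lam.card : ℤ) - n + a + b) *
    (lam.map (fun m => ((m - 1).choose a : ℤ))).sum

/-- `φ(λ,i,j) = (−1)^{i+j} C(ℓ−1, ℓ−n+i) Σ_{d=1}^{j} (−1)^d C(i−d, j−d) Σ_{k=1}^{ℓ} C(λ_k−1, d)`
for a partition `λ` of `n` with `ℓ` parts. -/
def phi (n : ℕ) (lam : Multiset ℕ) (i j : ℕ) : ℤ :=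
  (-1 : ℤ) ^ (i + j) * chooseInt (lam.card - 1) ((lam.card : ℤ) - n + i) *
    ∑ d ∈ Finset.Icc 1 j, (-1 : ℤ) ^ d * ((i - d).choose (j - d) : ℤ) *
      (lam.map (fun m => ((m - 1).choose d : ℤ))).sum

/-!
Expanding `c_λ` over edge sets turns the right-hand side into `Σ_B (-1)^|B| ψ(type B, a, b)`
over `B ⊆ E(T)`. Such a `B` is a forest with `ℓ = n - |B|` components, and
`Σ_k C(λ_k - 1, a)` counts the `a`-sets `A` lying inside one component of `B`; these are exactly
the `A` with `A ∪ K(A) ⊆ B`, because `A ∪ K(A)` is the smallest subtree containing `A`.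
Exchanging the sums, the coefficient of each `A` is a signed sum of
`C(n - 1 - |B|, a + b - |B|)` over the interval `[A ∪ K(A), E(T)]` of the boolean lattice,
which collapses to `[|K(A)| = b]`.
-/

section Subtrees

variable {T : SimpleGraph V}

abbrev endpoints (S : Set (Sym2 V)) : Set V := {v | ∃ e ∈ S, v ∈ e}

lemma SimpleGraph.Reachable.induce_of_adj_closed {G : SimpleGraph V} {s : Set V}
    (hs : ∀ ⦃x y⦄, G.Adj x y → x ∈ s → y ∈ s) {u v : V} (h : G.Reachable u v)
    (hu : u ∈ s) (hv : v ∈ s) : (G.induce s).Reachable ⟨u, hu⟩ ⟨v, hv⟩ := by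
  obtain ⟨p⟩ := h
  induction p with
  | nil => rfl
  | cons h _ ih =>
    exact (show (G.induce s).Adj ⟨_, hu⟩ ⟨_, hs h hu⟩ from h).reachable.trans (ih _ hv)

lemma SimpleGraph.induce_connected_iff_of_adj_closed {G : SimpleGraph V} {s : Set V}
    (hs : ∀ ⦃x y⦄, G.Adj x y → x ∈ s → y ∈ s) :
    (G.induce s).Connected ↔ s.Nonempty ∧ ∀ u ∈ s, ∀ v ∈ s, G.Reachable u v := by
  rw [connected_iff]
  constructor
  · rintro ⟨hpre, ⟨u, hu⟩⟩
    exact ⟨⟨u, hu⟩, fun u hu v hv => (hpre ⟨u, hu⟩ ⟨v, hv⟩).map (Embedding.induce s).toHom⟩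
  · rintro ⟨⟨u, hu⟩, hreach⟩
    exact ⟨fun x y => (hreach x x.2 y y.2).induce_of_adj_closed hs x.2 y.2, ⟨⟨u, hu⟩⟩⟩

lemma endpoints_adj_closed {S : Set (Sym2 V)} ⦃x y : V⦄ (h : (fromEdgeSet S).Adj x y)
    (_ : x ∈ endpoints S) : y ∈ endpoints S :=
  ⟨s(x, y), ((fromEdgeSet_adj S).1 h).1, Sym2.mem_mk_right x y⟩

lemma isSubtreeSet_iff {S : Set (Sym2 V)} :
    IsSubtreeSet T S ↔ S.Nonempty ∧ S ⊆ T.edgeSet ∧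
      ∀ u ∈ endpoints S, ∀ v ∈ endpoints S, (fromEdgeSet S).Reachable u v := by
  rw [IsSubtreeSet, induce_connected_iff_of_adj_closed endpoints_adj_closed]
  refine and_congr_right fun ⟨e, he⟩ => and_congr_right fun _ =>
    and_iff_right ⟨e.out.1, e, he, Sym2.out_fst_mem e⟩

lemma IsSubtreeSet.reachable {S : Set (Sym2 V)} (hS : IsSubtreeSet T S) {u v : V}
    (hu : u ∈ endpoints S) (hv : v ∈ endpoints S) : (fromEdgeSet S).Reachable u v :=
  (isSubtreeSet_iff.1 hS).2.2 u hu v hv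

lemma IsSubtreeSet.mem_of_mem_edges_of_isPath (hT : T.IsAcyclic) {S : Set (Sym2 V)}
    (hS : IsSubtreeSet T S) {u v : V} (hu : u ∈ endpoints S) (hv : v ∈ endpoints S)
    {p : T.Walk u v} (hp : p.IsPath) {e : Sym2 V} (he : e ∈ p.edges) : e ∈ S := by
  classical
  obtain ⟨q⟩ := hS.reachable hu hv
  have hqS : ∀ e ∈ q.edges, e ∈ S := fun e he =>
    (edgeSet_fromEdgeSet S ▸ q.edges_subset_edgeSet he).1
  have hqT : ∀ e ∈ q.edges, e ∈ T.edgeSet := fun e he => hS.2.1 (hqS e he)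
  have hpq : p = (q.transfer T hqT).bypass := congrArg Subtype.val
    ((hT.subsingleton_path u v).elim ⟨p, hp⟩ ⟨_, (q.transfer T hqT).bypass_isPath⟩)
  subst hpq
  exact hqS e (q.edges_transfer hqT ▸ (q.transfer T hqT).edges_bypass_subset_edges he)

lemma IsSubtreeSet.inter (hT : T.IsAcyclic) {S₁ S₂ : Set (Sym2 V)} (h₁ : IsSubtreeSet T S₁)
    (h₂ : IsSubtreeSet T S₂) (hne : (S₁ ∩ S₂).Nonempty) : IsSubtreeSet T (S₁ ∩ S₂) := by
  classical
  refine isSubtreeSet_iff.2 ⟨hne, fun e he => h₁.2.1 he.1, ?_⟩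
  rintro u ⟨e, ⟨he₁, he₂⟩, hue⟩ v ⟨f, ⟨hf₁, hf₂⟩, hvf⟩
  obtain ⟨q⟩ := (h₁.reachable ⟨e, he₁, hue⟩ ⟨f, hf₁, hvf⟩).mono
    ((fromEdgeSet_le T).2 fun e he => h₁.2.1 he.1)
  have hp := q.bypass_isPath
  refine ⟨q.bypass.transfer _ fun g hg => ?_⟩
  rw [edgeSet_fromEdgeSet]
  exact ⟨⟨h₁.mem_of_mem_edges_of_isPath hT ⟨e, he₁, hue⟩ ⟨f, hf₁, hvf⟩ hp hg,
    h₂.mem_of_mem_edges_of_isPath hT ⟨e, he₂, hue⟩ ⟨f, hf₂, hvf⟩ hp hg⟩,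
    T.not_isDiag_of_mem_edgeSet (q.bypass.edges_subset_edgeSet hg)⟩

lemma isSubtreeSet_edgeSet (hT : T.Connected) (hne : T.edgeSet.Nonempty) :
    IsSubtreeSet T T.edgeSet :=
  isSubtreeSet_iff.2 ⟨hne, subset_rfl, fun u _ v _ => by
    rw [fromEdgeSet_edgeSet]
    exact hT.preconnected u v⟩

lemma connector_subset {A B : Set (Sym2 V)} (hB : B ⊆ T.edgeSet \ A)
    (hAB : IsSubtreeSet T (A ∪ B)) : connector T A ⊆ B :=
  Set.sInter_subset_of_mem ⟨hB, hAB⟩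

/-- The candidate connectors of `A` are closed under intersection, so for finite `T` their
intersection `connector T A` is itself a candidate. -/
lemma connector_spec [Finite V] (hT : T.IsTree) {A : Set (Sym2 V)} (hA : A.Nonempty)
    (hAE : A ⊆ T.edgeSet) :
    connector T A ⊆ T.edgeSet \ A ∧ IsSubtreeSet T (A ∪ connector T A) := by
  have hclosed : InfClosed {B | B ⊆ T.edgeSet \ A ∧ IsSubtreeSet T (A ∪ B)} :=
    fun B₁ h₁ B₂ h₂ => ⟨fun e he => h₁.1 he.1, Set.union_inter_distrib_left A B₁ B₂ ▸
      h₁.2.inter hT.isAcyclic h₂.2 (hA.mono (Set.subset_inter Set.subset_union_left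
        Set.subset_union_left))⟩
  refine hclosed.sInf_mem_of_nonempty (Set.toFinite _) ⟨T.edgeSet \ A, subset_rfl, ?_⟩ subset_rfl
  rw [Set.union_sdiff_cancel hAE]
  exact isSubtreeSet_edgeSet hT.connected (hA.mono hAE)

lemma union_connector_subset {A S : Set (Sym2 V)} (hS : IsSubtreeSet T S) (hAS : A ⊆ S) :
    A ∪ connector T A ⊆ S := by
  refine Set.union_subset hAS ((connector_subset (B := S \ A) ?_ ?_).trans Set.sdiff_subset)
  · exact Set.sdiff_subset_sdiff_left hS.2.1
  · rwa [Set.union_sdiff_cancel hAS]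

end Subtrees

section Components

open Classical

lemma SimpleGraph.sum_ncard_supp [Fintype V] (G : SimpleGraph V)
    [Fintype G.ConnectedComponent] :
    ∑ c : G.ConnectedComponent, c.supp.ncard = Fintype.card V := by
  rw [← card_univ, card_eq_sum_card_fiberwise (f := G.connectedComponentMk) (t := univ)
    fun _ _ => mem_univ _]
  refine sum_congr rfl fun c _ => ?_
  rw [← Set.ncard_coe_finset]
  congr 1
  ext v
  simp [ConnectedComponent.mem_supp_iff]

noncomputable def compEdges (B : Finset (Sym2 V))
    (c : (fromEdgeSet (B : Set (Sym2 V))).ConnectedComponent) : Finset (Sym2 V) :=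
  {e ∈ B | ∀ v ∈ e, v ∈ c.supp}

lemma mem_compEdges {B : Finset (Sym2 V)}
    {c : (fromEdgeSet (B : Set (Sym2 V))).ConnectedComponent} {e : Sym2 V} :
    e ∈ compEdges B c ↔ e ∈ B ∧ ∀ v ∈ e, v ∈ c.supp :=
  mem_filter

lemma compEdges_subset (B : Finset (Sym2 V))
    (c : (fromEdgeSet (B : Set (Sym2 V))).ConnectedComponent) : compEdges B c ⊆ B :=
  filter_subset _ _

lemma reachable_fromEdgeSet_of_mem {B : Set (Sym2 V)} {e : Sym2 V} (he : e ∈ B) {x y : V}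
    (hx : x ∈ e) (hy : y ∈ e) : (fromEdgeSet B).Reachable x y := by
  induction e using Sym2.ind with
  | h a b =>
    have hab : (fromEdgeSet B).Reachable a b := by
      by_cases h : a = b
      · exact h ▸ Reachable.refl a
      · exact ((fromEdgeSet_adj B).2 ⟨he, h⟩).reachable
    rcases Sym2.mem_iff.1 hx with rfl | rfl <;> rcases Sym2.mem_iff.1 hy with rfl | rfl
    exacts [Reachable.refl _, hab, hab.symm, Reachable.refl _]

lemma mem_compEdges_iff {B : Finset (Sym2 V)}
    {c : (fromEdgeSet (B : Set (Sym2 V))).ConnectedComponent} {e : Sym2 V} {v : V} (hv : v ∈ e) :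
    e ∈ compEdges B c ↔ e ∈ B ∧ v ∈ c.supp := by
  refine mem_compEdges.trans (and_congr_right fun he => ⟨fun h => h v hv, fun h w hw => ?_⟩)
  rw [ConnectedComponent.mem_supp_iff] at h ⊢
  rw [← h]
  exact ConnectedComponent.sound (reachable_fromEdgeSet_of_mem (B := ↑B) he hw hv)

lemma eq_of_mem_compEdges {B : Finset (Sym2 V)}
    {c₁ c₂ : (fromEdgeSet (B : Set (Sym2 V))).ConnectedComponent} {e : Sym2 V}
    (h₁ : e ∈ compEdges B c₁) (h₂ : e ∈ compEdges B c₂) : c₁ = c₂ :=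
  ConnectedComponent.eq_of_common_vertex ((mem_compEdges_iff (Sym2.out_fst_mem e)).1 h₁).2
    ((mem_compEdges_iff (Sym2.out_fst_mem e)).1 h₂).2

lemma sum_card_compEdges [Fintype V] (B : Finset (Sym2 V)) : ∑ c, #(compEdges B c) = #B := by
  rw [← card_biUnion]
  · congr 1
    ext e
    simp only [mem_biUnion, mem_univ, true_and, mem_compEdges_iff (Sym2.out_fst_mem e)]
    exact ⟨fun ⟨_, he, _⟩ => he, fun he => ⟨_, he, rfl⟩⟩
  · intro c₁ _ c₂ _ hne
    exact disjoint_left.2 fun e h₁ h₂ => hne (eq_of_mem_compEdges h₁ h₂)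

lemma card_compEdges_add_one [Fintype V] {T : SimpleGraph V} (hT : T.IsAcyclic)
    {B : Finset (Sym2 V)} (hB : (B : Set (Sym2 V)) ⊆ T.edgeSet)
    (c : (fromEdgeSet (B : Set (Sym2 V))).ConnectedComponent) :
    #(compEdges B c) + 1 = c.supp.ncard := by
  have hmap : ((fromEdgeSet (B : Set (Sym2 V))).induce c.supp).edgeFinset.map
      (Function.Embedding.subtype (· ∈ c.supp)).sym2Map = compEdges B c := by
    rw [map_edgeFinset_induce]
    ext e
    simp only [compEdges, mem_inter, mem_edgeFinset, edgeSet_fromEdgeSet, Set.mem_sdiff, mem_coe,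
      mem_sym2_iff, Set.mem_toFinset, mem_filter]
    exact ⟨fun h => ⟨h.1.1, h.2⟩, fun h => ⟨⟨h.1, T.not_isDiag_of_mem_edgeSet (hB h.1)⟩, h.2⟩⟩
  have htree : ((fromEdgeSet (B : Set (Sym2 V))).induce c.supp).IsTree :=
    (hT.anti ((fromEdgeSet_le T).2 fun e he => hB he.1)).isTree_connectedComponent c
  rw [← hmap, card_map, htree.card_edgeFinset, ← Nat.card_eq_fintype_card, Nat.card_coe_set_eq]

lemma isSubtreeSet_compEdges {T : SimpleGraph V} {B : Finset (Sym2 V)}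
    (hB : (B : Set (Sym2 V)) ⊆ T.edgeSet)
    (c : (fromEdgeSet (B : Set (Sym2 V))).ConnectedComponent) (hne : (compEdges B c).Nonempty) :
    IsSubtreeSet T (compEdges B c : Set (Sym2 V)) := by
  refine isSubtreeSet_iff.2 ⟨by exact_mod_cast hne, fun e he => hB (mem_compEdges.1 he).1, ?_⟩
  rintro u ⟨e, he, hue⟩ v ⟨f, hf, hvf⟩
  let φ : c.toSimpleGraph →g fromEdgeSet (compEdges B c : Set (Sym2 V)) :=
    { toFun := Subtype.val
      map_rel' := fun {x y} h => by
        have hxy : (fromEdgeSet (B : Set (Sym2 V))).Adj x y := h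
        exact (fromEdgeSet_adj _).2 ⟨(mem_compEdges_iff (Sym2.mem_mk_left _ _)).2
          ⟨((fromEdgeSet_adj _).1 hxy).1, x.2⟩, hxy.ne⟩ }
  exact (c.reachable_toSimpleGraph ((mem_compEdges.1 he).2 u hue)
    ((mem_compEdges.1 hf).2 v hvf)).map φ

lemma IsSubtreeSet.exists_subset_compEdges {T : SimpleGraph V} {S : Set (Sym2 V)}
    (hS : IsSubtreeSet T S) {B : Finset (Sym2 V)} (hSB : S ⊆ B) : ∃ c, S ⊆ compEdges B c := by
  obtain ⟨e₀, he₀⟩ := hS.1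
  refine ⟨(fromEdgeSet (B : Set (Sym2 V))).connectedComponentMk e₀.out.1, fun e he => ?_⟩
  rw [mem_coe, mem_compEdges_iff (Sym2.out_fst_mem e)]
  refine ⟨hSB he, ConnectedComponent.sound ?_⟩
  exact (hS.reachable ⟨e, he, Sym2.out_fst_mem e⟩ ⟨e₀, he₀, Sym2.out_fst_mem e₀⟩).mono
    (fromEdgeSet_mono hSB)

end Components

section EdgeSetType

open Classical

variable [Fintype V]

lemma sum_map_edgeSetType {M : Type*} [AddCommMonoid M] (B : Finset (Sym2 V)) (g : ℕ → M) :
    ((edgeSetType B).map g).sum = ∑ c : (fromEdgeSet (B : Set (Sym2 V))).ConnectedComponent,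
      g c.supp.ncard := by
  rw [edgeSetType, image_univ_of_surjective fun c => c.exists_rep, Multiset.map_map]
  rfl

lemma card_edgeSetType (B : Finset (Sym2 V)) :
    Multiset.card (edgeSetType B) =
      Fintype.card (fromEdgeSet (B : Set (Sym2 V))).ConnectedComponent := by
  rw [edgeSetType, Multiset.card_map, image_univ_of_surjective fun c => c.exists_rep]
  exact card_univ

lemma sum_edgeSetType (B : Finset (Sym2 V)) : (edgeSetType B).sum = Fintype.card V := by
  rw [← Multiset.map_id (edgeSetType B), sum_map_edgeSetType]
  exact (fromEdgeSet (B : Set (Sym2 V))).sum_ncard_supp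

lemma pos_of_mem_edgeSetType {B : Finset (Sym2 V)} {i : ℕ} (hi : i ∈ edgeSetType B) : 0 < i := by
  obtain ⟨c, -, rfl⟩ := Multiset.mem_map.1 hi
  exact (Set.ncard_pos (Set.toFinite _)).2 c.nonempty_supp

noncomputable def edgeSetPartition (B : Finset (Sym2 V)) : (Fintype.card V).Partition :=
  ⟨edgeSetType B, pos_of_mem_edgeSetType, sum_edgeSetType B⟩

lemma sum_partition_mul_cCoeff (G : SimpleGraph V) (f : Multiset ℕ → ℤ) :
    ∑ p : (Fintype.card V).Partition, f p.parts * cCoeff G p.parts =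
      ∑ B ∈ G.edgeFinset.powerset, (-1) ^ #B * f (edgeSetType B) := by
  simp only [cCoeff, mul_sum]
  have hB : ∀ B : Finset (Sym2 V), ∑ p : (Fintype.card V).Partition, f p.parts *
      (if ↑B ⊆ G.edgeSet ∧ edgeSetType B = p.parts then (-1) ^ #B else 0) =
        if B ⊆ G.edgeFinset then (-1) ^ #B * f (edgeSetType B) else 0 := by
    intro B
    rw [sum_eq_single (edgeSetPartition B)]
    · simp [edgeSetPartition, ← coe_subset, mul_comm]
    · rintro p - hp
      rw [if_neg fun h => hp (Nat.Partition.ext h.2.symm), mul_zero]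
    · simp
  rw [sum_comm, sum_congr rfl fun B _ => hB B, ← sum_filter]
  congr 1
  ext B
  simp

end EdgeSetType

section Binomial

lemma chooseInt_of_neg (p : ℕ) {q : ℤ} (hq : q < 0) : chooseInt p q = 0 := if_neg hq.not_ge

lemma chooseInt_natCast_sub {p m j : ℕ} :
    chooseInt p ((m : ℤ) - j) = if j ≤ m then (p.choose (m - j) : ℤ) else 0 := by
  split_ifs with hj
  · rw [chooseInt, if_pos (by omega), show (m : ℤ) - j = ((m - j : ℕ) : ℤ) by omega,
      Int.toNat_natCast]
  · exact chooseInt_of_neg p (by omega)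

lemma sum_range_neg_one_pow_mul_choose_mul_chooseInt (N : ℕ) (r : ℤ) :
    ∑ j ∈ range (N + 1), (-1) ^ j * (N.choose j : ℤ) * chooseInt (N - j) (r - j) =
      if r = 0 then 1 else 0 := by
  obtain hr | ⟨m, rfl⟩ : r < 0 ∨ ∃ m : ℕ, r = m := by
    rcases lt_or_ge r 0 with h | h
    exacts [.inl h, .inr ⟨r.toNat, (Int.toNat_of_nonneg h).symm⟩]
  · rw [if_neg hr.ne]
    exact sum_eq_zero fun j _ => by rw [chooseInt_of_neg _ (by omega), mul_zero]
  have hterm : ∀ j, (-1) ^ j * (N.choose j : ℤ) * chooseInt (N - j) (m - j) =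
      N.choose m * ((-1) ^ j * m.choose j) := by
    intro j
    rw [chooseInt_natCast_sub]
    split_ifs with hj
    · rw [mul_assoc, ← Nat.cast_mul, ← Nat.choose_mul hj]
      push_cast
      ring
    · simp [Nat.choose_eq_zero_of_lt (not_le.1 hj)]
  simp only [hterm, ← mul_sum, Nat.cast_eq_zero]
  rcases le_or_gt m N with hmN | hmN
  · rw [← sum_subset (range_subset_range.2 (Nat.succ_le_succ hmN)) fun j _ hj => by
      rw [Nat.choose_eq_zero_of_lt (by simpa using hj)]; simp,
      Int.alternating_sum_range_choose]
    split_ifs with hm <;> simp [hm]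
  · rw [Nat.choose_eq_zero_of_lt hmN, if_neg (by omega)]
    simp

lemma sum_Icc_neg_one_pow_mul_chooseInt {α : Type*} [DecidableEq α] {S E : Finset α}
    (hSE : S ⊆ E) (m : ℕ) :
    ∑ B ∈ Icc S E, (-1) ^ #B * chooseInt (#E - #B) ((m : ℤ) - #B) =
      if #S = m then (-1) ^ m else 0 := by
  have hdisj : ∀ C ∈ (E \ S).powerset, Disjoint S C := fun C hC =>
    disjoint_of_subset_right (mem_powerset.1 hC) disjoint_sdiff
  rw [Icc_eq_image_powerset hSE, sum_image fun C₁ h₁ C₂ h₂ h => by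
    rw [← union_sdiff_cancel_left (hdisj C₁ h₁), ← union_sdiff_cancel_left (hdisj C₂ h₂)]
    exact congrArg (· \ S) h]
  have hN : #(E \ S) = #E - #S := card_sdiff_of_subset hSE
  have hSE' : #S ≤ #E := card_le_card hSE
  rw [sum_congr rfl fun C hC => by rw [card_union_of_disjoint (hdisj C hC)],
    sum_powerset_apply_card fun j => (-1 : ℤ) ^ (#S + j) *
      chooseInt (#E - (#S + j)) ((m : ℤ) - ↑(#S + j))]
  have hterm : ∀ j ∈ range (#(E \ S) + 1), (#(E \ S)).choose j • ((-1 : ℤ) ^ (#S + j) *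
      chooseInt (#E - (#S + j)) ((m : ℤ) - ↑(#S + j))) = (-1) ^ #S * ((-1) ^ j *
        ((#(E \ S)).choose j : ℤ) * chooseInt (#(E \ S) - j) (((m : ℤ) - #S) - j)) := by
    intro j _
    rw [nsmul_eq_mul, show #E - (#S + j) = #(E \ S) - j by omega, pow_add]
    push_cast
    ring_nf
  rw [sum_congr rfl hterm, ← mul_sum, sum_range_neg_one_pow_mul_choose_mul_chooseInt]
  split_ifs with h₁ h₂ h₂
  · rw [← h₂, mul_one]
  · omega
  · omega
  · rw [mul_zero]

end Binomial

section Counting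

open Classical

variable [Fintype V] {T : SimpleGraph V}

lemma filter_powerset_univ_eq_filter_powersetCard (G : SimpleGraph V) {a : ℕ} (ha : 0 < a)
    (P : Finset (Sym2 V) → Prop) [DecidablePred P]
    [DecidablePred fun A : Finset (Sym2 V) => A.Nonempty ∧ ↑A ⊆ G.edgeSet ∧ #A = a ∧ P A] :
    (univ : Finset (Sym2 V)).powerset.filter
        (fun A : Finset (Sym2 V) => A.Nonempty ∧ ↑A ⊆ G.edgeSet ∧ #A = a ∧ P A) =
      (powersetCard a G.edgeFinset).filter P := by
  ext A
  have hE : A ⊆ G.edgeFinset ↔ ↑A ⊆ G.edgeSet := by rw [← coe_subset, coe_edgeFinset]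
  simp only [mem_filter, mem_powerset, subset_univ, true_and, mem_powersetCard, hE]
  exact ⟨fun ⟨_, hAE, hAa, hP⟩ => ⟨⟨hAE, hAa⟩, hP⟩,
    fun ⟨⟨hAE, hAa⟩, hP⟩ => ⟨card_pos.1 (hAa ▸ ha), hAE, hAa, hP⟩⟩

lemma card_connectedComponent_add_card (hT : T.IsAcyclic) {B : Finset (Sym2 V)}
    (hB : (B : Set (Sym2 V)) ⊆ T.edgeSet) :
    Fintype.card (fromEdgeSet (B : Set (Sym2 V))).ConnectedComponent + #B = Fintype.card V := by
  rw [← (fromEdgeSet (B : Set (Sym2 V))).sum_ncard_supp, ← sum_card_compEdges B,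
    ← sum_congr rfl fun c _ => card_compEdges_add_one hT hB c, sum_add_distrib, sum_const,
    card_univ, smul_eq_mul, mul_one, add_comm]

noncomputable def spannedSubtree (T : SimpleGraph V) (A : Finset (Sym2 V)) : Finset (Sym2 V) :=
  (Set.toFinite (↑A ∪ connector T ↑A)).toFinset

lemma coe_spannedSubtree (A : Finset (Sym2 V)) :
    (spannedSubtree T A : Set (Sym2 V)) = ↑A ∪ connector T ↑A :=
  Set.Finite.coe_toFinset _

lemma card_spannedSubtree (hT : T.IsTree) {A : Finset (Sym2 V)} (hA : A.Nonempty)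
    (hAE : A ⊆ T.edgeFinset) : #(spannedSubtree T A) = #A + (connector T ↑A).ncard := by
  have hK := (connector_spec hT (coe_nonempty.2 hA) (coe_edgeFinset T ▸ coe_subset.2 hAE)).1
  rw [← Set.ncard_coe_finset, coe_spannedSubtree, Set.ncard_union_eq
    (Set.disjoint_right.2 fun e he => (hK he).2), Set.ncard_coe_finset]

lemma spannedSubtree_subset_edgeFinset (hT : T.IsTree) {A : Finset (Sym2 V)} (hA : A.Nonempty)
    (hAE : A ⊆ T.edgeFinset) : spannedSubtree T A ⊆ T.edgeFinset := by
  have hAE' := coe_edgeFinset T ▸ coe_subset.2 hAE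
  rw [← coe_subset, coe_spannedSubtree, coe_edgeFinset]
  exact Set.union_subset hAE' fun e he => (connector_spec hT (coe_nonempty.2 hA) hAE').1 he |>.1

lemma spannedSubtree_subset_iff (hT : T.IsTree) {A B : Finset (Sym2 V)} (hA : A.Nonempty)
    (hAB : A ⊆ T.edgeFinset) (hB : B ⊆ T.edgeFinset) :
    spannedSubtree T A ⊆ B ↔ ∃ c, A ⊆ compEdges B c := by
  rw [← coe_subset, coe_spannedSubtree]
  constructor
  · intro h
    obtain ⟨c, hc⟩ := (connector_spec hT (coe_nonempty.2 hA)
      (coe_edgeFinset T ▸ coe_subset.2 hAB)).2.exists_subset_compEdges h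
    exact ⟨c, coe_subset.1 (Set.subset_union_left.trans hc)⟩
  · rintro ⟨c, hc⟩
    refine (union_connector_subset (isSubtreeSet_compEdges ?_ c (hA.mono hc))
      (coe_subset.2 hc)).trans (coe_subset.2 (compEdges_subset _ _))
    exact coe_edgeFinset T ▸ coe_subset.2 hB

lemma card_filter_spannedSubtree_subset (hT : T.IsTree) {a : ℕ} (ha : 0 < a)
    {B : Finset (Sym2 V)} (hB : B ⊆ T.edgeFinset) :
    #{A ∈ powersetCard a T.edgeFinset | spannedSubtree T A ⊆ B} =
      ∑ c, (#(compEdges B c)).choose a := by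
  rw [← sum_congr rfl fun c _ => card_powersetCard a (compEdges B c), ← card_biUnion]
  · congr 1
    ext A
    simp only [mem_filter, mem_powersetCard, mem_biUnion, mem_univ, true_and]
    constructor
    · rintro ⟨⟨hAE, hAa⟩, h⟩
      obtain ⟨c, hc⟩ := (spannedSubtree_subset_iff hT (card_pos.1 (hAa ▸ ha)) hAE hB).1 h
      exact ⟨c, hc, hAa⟩
    · rintro ⟨c, hc, hAa⟩
      have hAE : A ⊆ T.edgeFinset := (hc.trans (compEdges_subset _ _)).trans hB
      exact ⟨⟨hAE, hAa⟩, (spannedSubtree_subset_iff hT (card_pos.1 (hAa ▸ ha)) hAE hB).2 ⟨c, hc⟩⟩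
  · intro c₁ _ c₂ _ hne
    refine disjoint_left.2 fun A h₁ h₂ => hne ?_
    obtain ⟨e, he⟩ := card_pos.1 ((mem_powersetCard.1 h₁).2 ▸ ha)
    exact eq_of_mem_compEdges ((mem_powersetCard.1 h₁).1 he) ((mem_powersetCard.1 h₂).1 he)

lemma psi_edgeSetType (hT : T.IsTree) {a : ℕ} (ha : 0 < a) (b : ℕ) {B : Finset (Sym2 V)}
    (hB : B ⊆ T.edgeFinset) :
    psi (Fintype.card V) (edgeSetType B) a b = (-1) ^ (a + b) *
      chooseInt (#T.edgeFinset - #B) (((a + b : ℕ) : ℤ) - #B) *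
        #{A ∈ powersetCard a T.edgeFinset | spannedSubtree T A ⊆ B} := by
  have hB' : (B : Set (Sym2 V)) ⊆ T.edgeSet := coe_edgeFinset T ▸ coe_subset.2 hB
  have hℓ := card_connectedComponent_add_card hT.isAcyclic hB'
  have hE := hT.card_edgeFinset
  rw [psi, card_filter_spannedSubtree_subset hT ha hB, sum_map_edgeSetType, card_edgeSetType]
  have hsum : ∑ c : (fromEdgeSet (B : Set (Sym2 V))).ConnectedComponent,
      (((c.supp.ncard - 1).choose a : ℕ) : ℤ) = ((∑ c, (#(compEdges B c)).choose a : ℕ) : ℤ) := by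
    push_cast
    refine sum_congr rfl fun c _ => ?_
    rw [← card_compEdges_add_one hT.isAcyclic hB' c, Nat.add_sub_cancel]
  rw [hsum, show Fintype.card (fromEdgeSet (B : Set (Sym2 V))).ConnectedComponent - 1 =
      #T.edgeFinset - #B by omega]
  congr 3
  push_cast
  omega

lemma sum_Icc_spannedSubtree (hT : T.IsTree) {A : Finset (Sym2 V)} (hA : A.Nonempty)
    (hAE : A ⊆ T.edgeFinset) (b : ℕ) :
    ∑ B ∈ Icc (spannedSubtree T A) T.edgeFinset,
        (-1) ^ #B * chooseInt (#T.edgeFinset - #B) (((#A + b : ℕ) : ℤ) - #B) =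
      if (connector T ↑A).ncard = b then (-1) ^ (#A + b) else 0 := by
  rw [sum_Icc_neg_one_pow_mul_chooseInt (spannedSubtree_subset_edgeFinset hT hA hAE),
    card_spannedSubtree hT hA hAE]
  simp only [add_right_inj]

end Counting

open Classical in
/-- Let `T` be a tree with `n` vertices and let `a ≥ 1`, `b ≥ 0`.  Then the number of nonempty
subsets `A ⊆ E(T)` with `#A = a` and `#K(A) = b` equals `Σ_{λ ⊢ n} ψ(λ,a,b)·c_λ(T)`. -/
theorem stmt_8 [Fintype V] (T : SimpleGraph V) (hT : T.IsTree)
    (a b : ℕ) (ha : 1 ≤ a) :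
    (((Finset.univ : Finset (Sym2 V)).powerset.filter
        (fun (A : Finset (Sym2 V)) => A.Nonempty ∧ (↑A : Set (Sym2 V)) ⊆ T.edgeSet ∧
          A.card = a ∧ (connector T (↑A : Set (Sym2 V))).ncard = b)).card : ℤ) =
      ∑ p : (Fintype.card V).Partition,
        psi (Fintype.card V) p.parts a b * cCoeff T p.parts := by
  rw [filter_powerset_univ_eq_filter_powersetCard T ha, card_filter,
    sum_partition_mul_cCoeff T fun lam => psi (Fintype.card V) lam a b]
  symm
  calc ∑ B ∈ T.edgeFinset.powerset, (-1) ^ #B * psi (Fintype.card V) (edgeSetType B) a b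
      = ∑ B ∈ T.edgeFinset.powerset, ∑ A ∈ powersetCard a T.edgeFinset,
          if spannedSubtree T A ⊆ B then (-1) ^ (a + b) *
            ((-1) ^ #B * chooseInt (#T.edgeFinset - #B) (((a + b : ℕ) : ℤ) - #B)) else 0 := by
        refine sum_congr rfl fun B hB => ?_
        rw [psi_edgeSetType hT ha b (mem_powerset.1 hB), card_filter, Nat.cast_sum, mul_sum,
          mul_sum]
        refine sum_congr rfl fun A _ => ?_
        split_ifs <;> ring
    _ = ∑ A ∈ powersetCard a T.edgeFinset, (-1) ^ (a + b) *
          ∑ B ∈ Icc (spannedSubtree T A) T.edgeFinset,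
            (-1) ^ #B * chooseInt (#T.edgeFinset - #B) (((a + b : ℕ) : ℤ) - #B) := by
        rw [sum_comm]
        simp only [Icc_eq_filter_powerset, sum_filter, mul_sum, mul_ite, mul_zero]
    _ = _ := by
        rw [Nat.cast_sum]
        refine sum_congr rfl fun A hA => ?_
        obtain ⟨hAE, rfl⟩ := mem_powersetCard.1 hA
        rw [sum_Icc_spannedSubtree hT (card_pos.1 ha) hAE]
        split_ifs
        · rw [← mul_pow, neg_one_mul, neg_neg, one_pow, Nat.cast_one]
        · rw [mul_zero, Nat.cast_zero]
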